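/- arXiv:2001.09013 — 4 statements merged into one kernel-verified Lean document; each statement's English description precedes it below -/
import Mathlib

section
/- Let Q = Q₁ × Q₂ with Q₁ ⊆ E₁, Q₂ ⊆ E₂ convex compact sets, and let f : Q₁ × Q₂ → ℝ be convex in its first argument and concave in its second argument. Let δ, δ̃ ≥ 0, L > 0, N ≥ 1, and let ψ_δ : Q × Q → ℝ satisfy: ψ_δ(·, y) convex for every y, ψ_δ(x, x) = 0, and f(u_y, v_x) − f(u_x, v_y) ≤ −ψ_δ(x, y) + δ for all x = (u_x, v_x), y = (u_y, v_y) ∈ Q. Let d be a convex differentiable function on E₁ × E₂ with Bregman divergence V, and let iterates z_k ∈ Q, w_k = (u_k, v_k) ∈ Q and 0 < L_{k+1} ≤ 2·L (k = 0, …, N−1) satisfy: w_k is a δ̃-approximate minimizer on Q of x ↦ ψ_δ(x, z_k) + L_{k+1}·V[z_k](x); z_{k+1} is a δ̃-approximate minimizer on Q of x ↦ ψ_δ(x, w_k) + L_{k+1}·V[z_k](x); and ψ_δ(z_{k+1}, z_k) ≤ ψ_δ(z_{k+1}, w_k) + ψ_δ(w_k, z_k) + L_{k+1}·(V[z_k](w_k)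 + V[w_k](z_{k+1})) + δ. Then, with S_N := ∑_{k=0}^{N−1} 1/L_{k+1} and (û_N, v̂_N) := (1/S_N)·∑_{k=0}^{N−1} w_k/L_{k+1}, (assuming f is continuous so the extrema exist) max_{v ∈ Q₂} f(û_N, v) − min_{u ∈ Q₁} f(u, v̂_N) ≤ (2·L·max_{(u,v) ∈ Q} V[z₀]((u,v)))/N + 2·δ̃ + 2·δ. -/
open RealInnerProductSpace Finset

/-- The inner product on `E₁ × E₂` induced by the inner products of the factors. -/
noncomputable def ipP {E₁ E₂ : Type*} [NormedAddCommGroup E₁] [InnerProductSpace ℝ E₁]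
    [NormedAddCommGroup E₂] [InnerProductSpace ℝ E₂] (x y : E₁ × E₂) : ℝ :=
  ⟪x.1, y.1⟫ + ⟪x.2, y.2⟫

/-- The Bregman divergence on `E₁ × E₂` generated by `d` with gradient map `Dd`. -/
noncomputable def bregP {E₁ E₂ : Type*} [NormedAddCommGroup E₁] [InnerProductSpace ℝ E₁]
    [NormedAddCommGroup E₂] [InnerProductSpace ℝ E₂]
    (d : E₁ × E₂ → ℝ) (Dd : E₁ × E₂ → E₁ × E₂) (y x : E₁ × E₂) : ℝ :=
  d x - d y - ipP (Dd y) (x - y)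

/-- `g` is a subgradient of `ψ` at `z` (relative to `Q`) on the product space. -/
noncomputable def IsSubgradOnP {E₁ E₂ : Type*} [NormedAddCommGroup E₁] [InnerProductSpace ℝ E₁]
    [NormedAddCommGroup E₂] [InnerProductSpace ℝ E₂]
    (Q : Set (E₁ × E₂)) (ψ : E₁ × E₂ → ℝ) (z g : E₁ × E₂) : Prop :=
  ∀ x ∈ Q, ψ z + ipP g (x - z) ≤ ψ x

/-- `y` is a `δ`-approximate minimizer of `Ψ` on `Q ⊆ E₁ × E₂`. -/
noncomputable def IsApproxMinOnP {E₁ E₂ : Type*}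
    [NormedAddCommGroup E₁] [InnerProductSpace ℝ E₁]
    [NormedAddCommGroup E₂] [InnerProductSpace ℝ E₂]
    (Q : Set (E₁ × E₂)) (Ψ : E₁ × E₂ → ℝ) (δ : ℝ) (y : E₁ × E₂) : Prop :=
  y ∈ Q ∧ ∃ h : E₁ × E₂, IsSubgradOnP Q Ψ y h ∧ ∀ x ∈ Q, -δ ≤ ipP h (x - y)

/-! Each iteration of the method consists of two approximate Bregman prox steps. Combining the
three-point inequality of both steps with the line-search condition and the model inequality
gives, for every `x ∈ Q`,
`f(u_k, v_x) - f(u_x, v_k) ≤ L_{k+1} (V[z_k](x) - V[z_{k+1}](x)) + 2 δ̃ + 2 δ`.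
Dividing by `L_{k+1}` and summing, the Bregman terms telescope; Jensen's inequality in each
variable of `f` moves the bound to the weighted average `(û_N, v̂_N)`, and `L_{k+1} ≤ 2 L` gives
`S_N ≥ N / (2 L)`. -/

open Set

section Subgradient

variable {E : Type*} [NormedAddCommGroup E] [NormedSpace ℝ E]

theorem ConvexOn.subgradient_sub_fderiv {Q : Set E} {φ g : E → ℝ} {g' : E →L[ℝ] ℝ}
    {ℓ : E →L[ℝ] ℝ} {x y : E} (hφ : ConvexOn ℝ Q φ) (hy : y ∈ Q) (hx : x ∈ Q)
    (hg : HasFDerivAt g g' y) (hsub : ∀ z ∈ Q, φ y + g y + ℓ (z - y) ≤ φ z + g z) :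
    φ y + ℓ (x - y) - g' (x - y) ≤ φ x := by
  -- On `[0, 1]`, `φ` along the segment lies below its chord, so `t = 0` minimises `G` there and
  -- the one-sided Fermat rule gives `G'(0) ≥ 0`.
  set G : ℝ → ℝ := fun t => g (AffineMap.lineMap y x t) + t * (φ x - φ y - ℓ (x - y))
  have hmin : IsMinOn G (Icc 0 1) 0 := by
    intro t ht
    have hconv : φ (AffineMap.lineMap y x t) ≤ (1 - t) * φ y + t * φ x := by
      simpa [AffineMap.lineMap_apply_module] using
        hφ.2 hy hx (sub_nonneg.2 ht.2) ht.1 (sub_add_cancel 1 t)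
    have hlin : ℓ (AffineMap.lineMap y x t - y) = t * ℓ (x - y) := by
      rw [← vsub_eq_sub, AffineMap.lineMap_vsub_left, map_smul, vsub_eq_sub, smul_eq_mul]
    have := hsub _ (hφ.1.lineMap_mem hy hx ht)
    show G 0 ≤ G t
    simp only [G, AffineMap.lineMap_apply_zero, zero_mul, add_zero]
    nlinarith
  have hG : HasDerivAt G (g' (x - y) + (φ x - φ y - ℓ (x - y))) 0 := by
    have hline := AffineMap.hasDerivAt_lineMap (a := y) (b := x) (x := (0 : ℝ))
    rw [← AffineMap.lineMap_apply_zero y x (k := ℝ)] at hg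
    exact ((hg.comp_hasDerivAt 0 hline).add ((hasDerivAt_id 0).mul_const _)).congr_deriv
      (by simp)
  have := hmin.localize.hasFDerivWithinAt_nonneg hG.hasFDerivAt.hasFDerivWithinAt
    (sub_mem_posTangentConeAt_of_segment_subset (segment_eq_Icc zero_le_one).subset)
  simp only [sub_zero, ContinuousLinearMap.toSpanSingleton_apply, one_smul] at this
  linarith

end Subgradient

section Bregman

variable {E₁ E₂ : Type*} [NormedAddCommGroup E₁] [InnerProductSpace ℝ E₁]
  [NormedAddCommGroup E₂] [InnerProductSpace ℝ E₂] {d : E₁ × E₂ → ℝ} {Dd : E₁ × E₂ → E₁ × E₂}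

-- `ipPCLM (Dd p)` is literally the derivative of `d` at `p` assumed in the theorem.
noncomputable def ipPCLM (g : E₁ × E₂) : E₁ × E₂ →L[ℝ] ℝ :=
  (innerSL ℝ g.1).comp (ContinuousLinearMap.fst ℝ E₁ E₂) +
    (innerSL ℝ g.2).comp (ContinuousLinearMap.snd ℝ E₁ E₂)

@[simp]
lemma ipPCLM_apply (g x : E₁ × E₂) : ipPCLM g x = ipP g x := rfl

lemma bregP_self (y : E₁ × E₂) : bregP d Dd y y = 0 := by
  simp [bregP, ipP]

lemma bregP_three_point (p y x : E₁ × E₂) :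
    bregP d Dd p x - bregP d Dd p y - bregP d Dd y x =
      ipP (Dd y) (x - y) - ipP (Dd p) (x - y) := by
  simp only [bregP, ipP, Prod.fst_sub, Prod.snd_sub, inner_sub_right]
  ring

lemma continuous_bregP (hd_diff : ∀ p, HasFDerivAt d (ipPCLM (Dd p)) p) (y : E₁ × E₂) :
    Continuous (bregP d Dd y) := by
  have hd : Continuous d := continuous_iff_continuousAt.2 fun p => (hd_diff p).continuousAt
  show Continuous fun x => d x - d y - ipPCLM (Dd y) (x - y)
  fun_prop

lemma bregP_le_sSup_image (hd_diff : ∀ p, HasFDerivAt d (ipPCLM (Dd p)) p)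
    {Q : Set (E₁ × E₂)} (hQ : IsCompact Q) {x : E₁ × E₂} (hx : x ∈ Q) (y : E₁ × E₂) :
    bregP d Dd y x ≤ sSup (bregP d Dd y '' Q) :=
  le_csSup (hQ.image (continuous_bregP hd_diff y)).bddAbove (mem_image_of_mem _ hx)

lemma hasFDerivAt_bregP (hd_diff : ∀ p, HasFDerivAt d (ipPCLM (Dd p)) p) (p y : E₁ × E₂) :
    HasFDerivAt (bregP d Dd p) (ipPCLM (Dd y) - ipPCLM (Dd p)) y := by
  have hbreg : bregP d Dd p = fun x => d x - d p - (ipPCLM (Dd p) x - ipPCLM (Dd p) p) := by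
    funext x
    simp only [bregP, ← ipPCLM_apply, map_sub]
  rw [hbreg]
  exact ((hd_diff y).sub_const (d p)).sub ((ipPCLM (Dd p)).hasFDerivAt.sub_const _)

lemma bregP_nonneg (hd_diff : ∀ p, HasFDerivAt d (ipPCLM (Dd p)) p)
    (hd_conv : ConvexOn ℝ univ d) (y x : E₁ × E₂) : 0 ≤ bregP d Dd y x := by
  -- `0` is a subgradient of `d + (-d)`, so this is the gradient inequality for `d`.
  have := hd_conv.subgradient_sub_fderiv (g := -d) (ℓ := 0) (mem_univ y) (mem_univ x)
    (hd_diff y).neg (by simp)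
  simp only [zero_apply, add_zero, neg_apply, ipPCLM_apply, sub_neg_eq_add] at this
  unfold bregP
  linarith

lemma IsApproxMinOnP.add_bregP_le (hd_diff : ∀ p, HasFDerivAt d (ipPCLM (Dd p)) p)
    {Q : Set (E₁ × E₂)} {φ : E₁ × E₂ → ℝ} {c δ : ℝ}
    {p x y : E₁ × E₂} (hφ : ConvexOn ℝ Q φ)
    (hy : IsApproxMinOnP Q (fun x => φ x + c * bregP d Dd p x) δ y) (hx : x ∈ Q) :
    φ y + c * (bregP d Dd p y + bregP d Dd y x) ≤ φ x + c * bregP d Dd p x + δ := by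
  obtain ⟨hyQ, h, hsub, happrox⟩ := hy
  have hsg := hφ.subgradient_sub_fderiv (ℓ := ipPCLM h) hyQ hx
    ((hasFDerivAt_bregP hd_diff p y).const_mul c) fun z hz => by
      have := hsub z hz
      simp only [ipPCLM_apply] at this ⊢
      linarith
  simp only [ipPCLM_apply, FunLike.coe_smul, FunLike.coe_sub, Pi.smul_apply, Pi.sub_apply,
    smul_eq_mul] at hsg
  rw [← bregP_three_point (d := d) (Dd := Dd) p y x] at hsg
  linarith [happrox x hx]

lemma neg_le_bregP_sub_of_mirrorProx_step (hd_diff : ∀ p, HasFDerivAt d (ipPCLM (Dd p)) p)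
    {Q : Set (E₁ × E₂)} {ψ : E₁ × E₂ → E₁ × E₂ → ℝ} {L δ δt : ℝ} {z z' w x : E₁ × E₂}
    (hψz : ConvexOn ℝ Q (ψ · z)) (hψw : ConvexOn ℝ Q (ψ · w))
    (hw : IsApproxMinOnP Q (fun x => ψ x z + L * bregP d Dd z x) δt w)
    (hz' : IsApproxMinOnP Q (fun x => ψ x w + L * bregP d Dd z x) δt z')
    (hls : ψ z' z ≤ ψ z' w + ψ w z + L * (bregP d Dd z w + bregP d Dd w z') + δ)
    (hx : x ∈ Q) :
    -ψ x w ≤ L * (bregP d Dd z x - bregP d Dd z' x) + 2 * δt + δ := by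
  have hw_step := hw.add_bregP_le hd_diff hψz hz'.1
  have hz'_step := hz'.add_bregP_le hd_diff hψw hx
  linarith

end Bregman

lemma sum_one_div_mul_le_of_le_mul_sub {N : ℕ} {g V L : ℕ → ℝ} {c : ℝ}
    (hL : ∀ k < N, 0 < L k) (hstep : ∀ k < N, g k ≤ L k * (V k - V (k + 1)) + c)
    (hV : 0 ≤ V N) :
    ∑ k ∈ range N, 1 / L k * g k ≤ V 0 + c * ∑ k ∈ range N, 1 / L k := by
  calc ∑ k ∈ range N, 1 / L k * g k
      ≤ ∑ k ∈ range N, (V k - V (k + 1) + c * (1 / L k)) := by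
        refine sum_le_sum fun k hk => ?_
        have hLk := hL k (mem_range.1 hk)
        have := hstep k (mem_range.1 hk)
        rw [one_div, inv_mul_le_iff₀ hLk, mul_add, mul_left_comm, mul_inv_cancel₀ hLk.ne',
          mul_one]
        linarith
    _ = V 0 - V N + c * ∑ k ∈ range N, 1 / L k := by
        rw [sum_add_distrib, sum_range_sub', mul_sum]
    _ ≤ V 0 + c * ∑ k ∈ range N, 1 / L k := by linarith

lemma card_div_le_sum_one_div {N : ℕ} {L : ℕ → ℝ} {B : ℝ} (hL : ∀ k < N, 0 < L k)
    (hLB : ∀ k < N, L k ≤ B) : N / B ≤ ∑ k ∈ range N, 1 / L k := by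
  calc (N : ℝ) / B = ∑ _k ∈ range N, 1 / B := by simp [div_eq_mul_inv]
    _ ≤ ∑ k ∈ range N, 1 / L k := sum_le_sum fun k hk =>
        one_div_le_one_div_of_le (hL k (mem_range.1 hk)) (hLB k (mem_range.1 hk))

lemma gap_centerMass_le {ι E₁ E₂ : Type*} [AddCommGroup E₁] [Module ℝ E₁] [AddCommGroup E₂]
    [Module ℝ E₂] {Q₁ : Set E₁} {Q₂ : Set E₂} {f : E₁ → E₂ → ℝ} {u : E₁} {v : E₂}
    {s : Finset ι} {a : ι → ℝ} {w : ι → E₁ × E₂}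
    (hf_convex : ConvexOn ℝ Q₁ (f · v)) (hf_concave : ConcaveOn ℝ Q₂ (f u ·))
    (ha : ∀ i ∈ s, 0 ≤ a i) (ha_sum : 0 < ∑ i ∈ s, a i) (hw : ∀ i ∈ s, w i ∈ Q₁ ×ˢ Q₂) :
    f (s.centerMass a w).1 v - f u (s.centerMass a w).2 ≤
      s.centerMass a fun i => f (w i).1 v - f u (w i).2 := by
  have hconvex := hf_convex.map_centerMass_le ha ha_sum fun i hi => (hw i hi).1
  have hconcave := hf_concave.le_map_centerMass ha ha_sum fun i hi => (hw i hi).2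
  simp only [centerMass, Function.comp_def, Prod.fst_sum, Prod.snd_sum, Prod.smul_fst,
    Prod.smul_snd, smul_eq_mul, mul_sub, sum_sub_distrib] at hconvex hconcave ⊢
  linarith

lemma gap_centerMass_le_of_le_mul_sub {E₁ E₂ : Type*} [AddCommGroup E₁] [Module ℝ E₁]
    [AddCommGroup E₂] [Module ℝ E₂] {Q₁ : Set E₁} {Q₂ : Set E₂} {f : E₁ → E₂ → ℝ} {u : E₁}
    {v : E₂} {N : ℕ} {w : ℕ → E₁ × E₂} {L V : ℕ → ℝ} {c : ℝ}
    (hf_convex : ConvexOn ℝ Q₁ (f · v)) (hf_concave : ConcaveOn ℝ Q₂ (f u ·)) (hN : 0 < N)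
    (hL : ∀ k < N, 0 < L k) (hw : ∀ k < N, w k ∈ Q₁ ×ˢ Q₂)
    (hstep : ∀ k < N, f (w k).1 v - f u (w k).2 ≤ L k * (V k - V (k + 1)) + c)
    (hV : 0 ≤ V N) :
    f ((range N).centerMass (fun k => 1 / L k) w).1 v -
        f u ((range N).centerMass (fun k => 1 / L k) w).2 ≤
      V 0 / ∑ k ∈ range N, 1 / L k + c := by
  have hweights : ∀ k ∈ range N, 0 < 1 / L k :=
    fun k hk => one_div_pos.2 (hL k (mem_range.1 hk))
  have hS : 0 < ∑ k ∈ range N, 1 / L k :=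
    sum_pos hweights (nonempty_range_iff.2 hN.ne')
  calc _ ≤ (range N).centerMass (fun k => 1 / L k) (fun k => f (w k).1 v - f u (w k).2) :=
        gap_centerMass_le hf_convex hf_concave (fun k hk => (hweights k hk).le) hS
          fun k hk => hw k (mem_range.1 hk)
    _ ≤ (∑ k ∈ range N, 1 / L k)⁻¹ * (V 0 + c * ∑ k ∈ range N, 1 / L k) := by
        simp only [centerMass, smul_eq_mul]
        gcongr
        exact sum_one_div_mul_le_of_le_mul_sub hL hstep hV
    _ = V 0 / ∑ k ∈ range N, 1 / L k + c := by
        field_simp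

lemma sSup_image_sub_sInf_image_le {α β : Type*} {Q₁ : Set α} {Q₂ : Set β}
    (hQ₁ : Q₁.Nonempty) (hQ₂ : Q₂.Nonempty) {f : α → β → ℝ} {u₀ : α} {v₀ : β} {C : ℝ}
    (h : ∀ u ∈ Q₁, ∀ v ∈ Q₂, f u₀ v - f u v₀ ≤ C) :
    sSup ((fun v => f u₀ v) '' Q₂) - sInf ((fun u => f u v₀) '' Q₁) ≤ C := by
  rw [sub_le_iff_le_add]
  refine csSup_le (hQ₂.image _) ?_
  rintro _ ⟨v, hv, rfl⟩
  rw [← sub_le_iff_le_add']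
  refine le_csInf (hQ₁.image _) ?_
  rintro _ ⟨u, hu, rfl⟩
  linarith [h u hu v hv]

theorem stmt13_general
    {E₁ E₂ : Type*} [NormedAddCommGroup E₁] [InnerProductSpace ℝ E₁]
    [NormedAddCommGroup E₂] [InnerProductSpace ℝ E₂]
    (Q₁ : Set E₁) (Q₂ : Set E₂)
    (hQ₁comp : IsCompact Q₁) (hQ₂comp : IsCompact Q₂)
    (hQ₁ne : Q₁.Nonempty) (hQ₂ne : Q₂.Nonempty)
    (Q : Set (E₁ × E₂)) (hQdef : Q = Q₁ ×ˢ Q₂)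
    (f : E₁ → E₂ → ℝ)
    (hf_convex : ∀ v ∈ Q₂, ConvexOn ℝ Q₁ fun u => f u v)
    (hf_concave : ∀ u ∈ Q₁, ConcaveOn ℝ Q₂ fun v => f u v)
    (d : E₁ × E₂ → ℝ) (Dd : E₁ × E₂ → E₁ × E₂)
    (hd_conv : ConvexOn ℝ Set.univ d)
    (hd_diff : ∀ p : E₁ × E₂, HasFDerivAt d
      (((innerSL ℝ (Dd p).1).comp (ContinuousLinearMap.fst ℝ E₁ E₂)) +
        ((innerSL ℝ (Dd p).2).comp (ContinuousLinearMap.snd ℝ E₁ E₂))) p)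
    (ψδ : E₁ × E₂ → E₁ × E₂ → ℝ)
    (δ δt Lb : ℝ) (hLb : 0 < Lb)
    (hconv : ∀ y ∈ Q, ConvexOn ℝ Q fun x => ψδ x y)
    (hsaddle : ∀ x ∈ Q, ∀ y ∈ Q, f y.1 x.2 - f x.1 y.2 ≤ -ψδ x y + δ)
    (N : ℕ) (hN : 1 ≤ N)
    (z w : ℕ → E₁ × E₂) (L : ℕ → ℝ)
    (hzQ : ∀ k ≤ N, z k ∈ Q) (hwQ : ∀ k < N, w k ∈ Q)
    (hLpos : ∀ k < N, 0 < L (k + 1)) (hLle : ∀ k < N, L (k + 1) ≤ 2 * Lb)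
    (hwmin : ∀ k < N,
      IsApproxMinOnP Q (fun x => ψδ x (z k) + L (k + 1) * bregP d Dd (z k) x) δt (w k))
    (hzmin : ∀ k < N,
      IsApproxMinOnP Q (fun x => ψδ x (w k) + L (k + 1) * bregP d Dd (z k) x) δt (z (k + 1)))
    (hls : ∀ k < N,
      ψδ (z (k + 1)) (z k) ≤ ψδ (z (k + 1)) (w k) + ψδ (w k) (z k)
        + L (k + 1) * (bregP d Dd (z k) (w k) + bregP d Dd (w k) (z (k + 1))) + δ)
    (S : ℝ) (hS : S = ∑ k ∈ Finset.range N, 1 / L (k + 1))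
    (wavg : E₁ × E₂)
    (hwavg : wavg = S⁻¹ • ∑ k ∈ Finset.range N, (1 / L (k + 1)) • w k) :
    sSup ((fun v => f wavg.1 v) '' Q₂) - sInf ((fun u => f u wavg.2) '' Q₁) ≤
      2 * Lb * sSup ((fun p => bregP d Dd (z 0) p) '' Q) / N + 2 * δt + 2 * δ := by
  subst hQdef
  set M := sSup ((fun p => bregP d Dd (z 0) p) '' (Q₁ ×ˢ Q₂))
  have hQcomp := hQ₁comp.prod hQ₂comp
  have hM0 : 0 ≤ M := (bregP_self (z 0)).symm.trans_le
    (bregP_le_sSup_image hd_diff hQcomp (hzQ 0 N.zero_le) _)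
  have hSN : N / (2 * Lb) ≤ S := hS ▸ card_div_le_sum_one_div hLpos hLle
  refine sSup_image_sub_sInf_image_le hQ₁ne hQ₂ne fun u hu v hv => ?_
  have huv : (u, v) ∈ Q₁ ×ˢ Q₂ := ⟨hu, hv⟩
  have hstep : ∀ k < N, f (w k).1 v - f u (w k).2 ≤
      L (k + 1) * (bregP d Dd (z k) (u, v) - bregP d Dd (z (k + 1)) (u, v)) + (2 * δt + 2 * δ) :=
    fun k hk => by
      have := neg_le_bregP_sub_of_mirrorProx_step hd_diff (hconv _ (hzQ k hk.le)) (hconv _ (hwQ k hk)) (hwmin k hk)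
        (hzmin k hk) (hls k hk) huv
      linarith [hsaddle (u, v) huv (w k) (hwQ k hk)]
  have hgap := gap_centerMass_le_of_le_mul_sub (L := fun k => L (k + 1)) (hf_convex v hv)
    (hf_concave u hu) hN hLpos hwQ hstep (bregP_nonneg hd_diff hd_conv _ _)
  rw [centerMass, ← hS, ← hwavg] at hgap
  calc f wavg.1 v - f u wavg.2 ≤ bregP d Dd (z 0) (u, v) / S + (2 * δt + 2 * δ) := hgap
    _ ≤ M / (N / (2 * Lb)) + (2 * δt + 2 * δ) := by
        gcongr
        exact bregP_le_sSup_image hd_diff hQcomp huv _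
    _ = 2 * Lb * M / N + 2 * δt + 2 * δ := by
        rw [div_div_eq_mul_div]
        ring

/-- Theorem 4.16: duality-gap bound for the generalized Mirror-Prox method
applied to a saddle-point problem with a `(δ, L, V)`-model. -/
theorem stmt13
    {E₁ E₂ : Type*} [NormedAddCommGroup E₁] [InnerProductSpace ℝ E₁] [FiniteDimensional ℝ E₁]
    [NormedAddCommGroup E₂] [InnerProductSpace ℝ E₂] [FiniteDimensional ℝ E₂]
    (Q₁ : Set E₁) (Q₂ : Set E₂)
    (hQ₁ : Convex ℝ Q₁) (hQ₂ : Convex ℝ Q₂)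
    (hQ₁comp : IsCompact Q₁) (hQ₂comp : IsCompact Q₂)
    (hQ₁ne : Q₁.Nonempty) (hQ₂ne : Q₂.Nonempty)
    (Q : Set (E₁ × E₂)) (hQdef : Q = Q₁ ×ˢ Q₂)
    (f : E₁ → E₂ → ℝ)
    (hf_cont : Continuous fun p : E₁ × E₂ => f p.1 p.2)
    (hf_convex : ∀ v ∈ Q₂, ConvexOn ℝ Q₁ fun u => f u v)
    (hf_concave : ∀ u ∈ Q₁, ConcaveOn ℝ Q₂ fun v => f u v)
    (d : E₁ × E₂ → ℝ) (Dd : E₁ × E₂ → E₁ × E₂)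
    (hd_conv : ConvexOn ℝ Set.univ d)
    (hd_diff : ∀ p : E₁ × E₂, HasFDerivAt d
      (((innerSL ℝ (Dd p).1).comp (ContinuousLinearMap.fst ℝ E₁ E₂)) +
        ((innerSL ℝ (Dd p).2).comp (ContinuousLinearMap.snd ℝ E₁ E₂))) p)
    (ψδ : E₁ × E₂ → E₁ × E₂ → ℝ)
    (δ δt Lb : ℝ) (hδ : 0 ≤ δ) (hδt : 0 ≤ δt) (hLb : 0 < Lb)
    (hconv : ∀ y ∈ Q, ConvexOn ℝ Q fun x => ψδ x y)
    (hzero : ∀ x ∈ Q, ψδ x x = 0)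
    (hsaddle : ∀ x ∈ Q, ∀ y ∈ Q, f y.1 x.2 - f x.1 y.2 ≤ -ψδ x y + δ)
    (N : ℕ) (hN : 1 ≤ N)
    (z w : ℕ → E₁ × E₂) (L : ℕ → ℝ)
    (hzQ : ∀ k ≤ N, z k ∈ Q) (hwQ : ∀ k < N, w k ∈ Q)
    (hLpos : ∀ k < N, 0 < L (k + 1)) (hLle : ∀ k < N, L (k + 1) ≤ 2 * Lb)
    (hwmin : ∀ k < N,
      IsApproxMinOnP Q (fun x => ψδ x (z k) + L (k + 1) * bregP d Dd (z k) x) δt (w k))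
    (hzmin : ∀ k < N,
      IsApproxMinOnP Q (fun x => ψδ x (w k) + L (k + 1) * bregP d Dd (z k) x) δt (z (k + 1)))
    (hls : ∀ k < N,
      ψδ (z (k + 1)) (z k) ≤ ψδ (z (k + 1)) (w k) + ψδ (w k) (z k)
        + L (k + 1) * (bregP d Dd (z k) (w k) + bregP d Dd (w k) (z (k + 1))) + δ)
    (S : ℝ) (hS : S = ∑ k ∈ Finset.range N, 1 / L (k + 1))
    (wavg : E₁ × E₂)
    (hwavg : wavg = S⁻¹ • ∑ k ∈ Finset.range N, (1 / L (k + 1)) • w k) :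
    sSup ((fun v => f wavg.1 v) '' Q₂) - sInf ((fun u => f u wavg.2) '' Q₁) ≤
      2 * Lb * sSup ((fun p => bregP d Dd (z 0) p) '' Q) / N + 2 * δt + 2 * δ :=
  stmt13_general Q₁ Q₂ hQ₁comp hQ₂comp hQ₁ne hQ₂ne Q hQdef f hf_convex hf_concave d Dd hd_conv
    hd_diff ψδ δ δt Lb hLb hconv hsaddle N hN z w L hzQ hwQ hLpos hLle hwmin hzmin hls S hS wavg
    hwavg
end

section
/- Let f : E → ℝ be convex and differentiable on an open convex set containing Q, and suppose f is relatively L-smooth relative to d on Q, i.e. f(x) − f(y) − ⟨∇f(y), x − y⟩ ≤ L·V[y](x) for all x, y ∈ Q. Then the gradient operator is relatively L-smooth: for all x, y, z ∈ Q, ⟨∇f(y) − ∇f(z), x − z⟩ ≤ L·V[z](x) + L·V[y](z). -/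
open RealInnerProductSpace

/-- The Bregman divergence `V[y](x) = d(x) - d(y) - ⟪∇d(y), x - y⟫` generated by `d`
with gradient map `Dd`. -/
noncomputable def breg {E : Type*} [NormedAddCommGroup E] [InnerProductSpace ℝ E]
    (d : E → ℝ) (Dd : E → E) (y x : E) : ℝ :=
  d x - d y - ⟪Dd y, x - y⟫

/-- Gradient inequality for convex differentiable functions. -/
lemma grad_ineq_aux {E : Type*} [NormedAddCommGroup E] [InnerProductSpace ℝ E] [CompleteSpace E]
    (U : Set E) (f : E → ℝ) (Df : E → E)
    (hf_conv : ConvexOn ℝ U f)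
    (hf_diff : ∀ x ∈ U, HasGradientAt f (Df x) x)
    {x y : E} (hx : x ∈ U) (hy : y ∈ U) :
    ⟪Df y, x - y⟫ ≤ f x - f y := by
  set c : ℝ →ᵃ[ℝ] E := AffineMap.lineMap y x with hc
  have hg_conv : ConvexOn ℝ (c ⁻¹' U) (f ∘ c) := hf_conv.comp_affineMap c
  have h0 : (0 : ℝ) ∈ c ⁻¹' U := by simp [hc, hy]
  have h1 : (1 : ℝ) ∈ c ⁻¹' U := by simp [hc, hx]
  have hceq : (fun t : ℝ => c t) = fun t : ℝ => t • (x - y) + y := by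
    funext t
    simp only [hc, AffineMap.lineMap_apply_module]
    module
  have hcd : HasDerivAt (fun t : ℝ => c t) (x - y) 0 := by
    rw [hceq]
    simpa using ((hasDerivAt_id (0 : ℝ)).smul_const (x - y)).add_const y
  have hgd : HasDerivAt (f ∘ c) ⟪Df y, x - y⟫ 0 := by
    have hf' := (hf_diff y hy).hasFDerivAt
    have hc0 : c 0 = y := by simp [hc]
    rw [← hc0] at hf'
    have := hf'.comp_hasDerivAt (x := (0 : ℝ))
      (f := fun t : ℝ => c t) (by simpa [hc] using hcd)
    simpa [hc] using this
  have := hg_conv.le_slope_of_hasDerivAt h0 h1 zero_lt_one hgd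
  simpa [slope, hc, Function.comp] using this

/-- Example 4.7: if `f` is convex and relatively `L`-smooth relative to `d`
on `Q`, then its gradient operator is relatively `L`-smooth. -/
theorem stmt15
    {E : Type*} [NormedAddCommGroup E] [InnerProductSpace ℝ E] [FiniteDimensional ℝ E]
    (Q : Set E) (hQ : Convex ℝ Q)
    (d : E → ℝ) (Dd : E → E)
    (hd_conv : ConvexOn ℝ Set.univ d) (hd_diff : ∀ x, HasGradientAt d (Dd x) x)
    (U : Set E) (hU_open : IsOpen U) (hU_conv : Convex ℝ U) (hQU : Q ⊆ U)
    (f : E → ℝ) (Df : E → E)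
    (hf_conv : ConvexOn ℝ U f)
    (hf_diff : ∀ x ∈ U, HasGradientAt f (Df x) x)
    (L : ℝ) (hL : 0 < L)
    (hrel : ∀ x ∈ Q, ∀ y ∈ Q, f x - f y - ⟪Df y, x - y⟫ ≤ L * breg d Dd y x) :
    ∀ x ∈ Q, ∀ y ∈ Q, ∀ z ∈ Q,
      ⟪Df y - Df z, x - z⟫ ≤ L * breg d Dd z x + L * breg d Dd y z := by
  intro x hx y hy z hz
  have h1 : f x - f z - ⟪Df z, x - z⟫ ≤ L * breg d Dd z x := hrel x hx z hz
  have h2 : f z - f y - ⟪Df y, z - y⟫ ≤ L * breg d Dd y z := hrel z hz y hy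
  have h3 : ⟪Df y, x - y⟫ ≤ f x - f y :=
    grad_ineq_aux U f Df hf_conv hf_diff (hQU hx) (hQU hy)
  have key : ⟪Df y - Df z, x - z⟫
      = (⟪Df y, x - y⟫ - (f x - f y))
        + (f x - f z - ⟪Df z, x - z⟫) + (f z - f y - ⟪Df y, z - y⟫) := by
    simp only [inner_sub_left, inner_sub_right]
    ring
  linarith
end

section
/- Let ‖·‖ be a norm on E with dual norm ‖v‖_* := sup{⟨v, x⟩ : ‖x‖ ≤ 1}, let d be 1-strongly convex with respect to ‖·‖ (V[y](x) ≥ (1/2)·‖x − y‖² for all x, y ∈ Q), let ν ∈ [0, 1], L_ν > 0, and let g : Q → E satisfy the Hölder condition ‖g(x) − g(y)‖_* ≤ L_ν·‖x − y‖^ν for all x, y ∈ Q. Then for every δ > 0 and all x, y, z ∈ Q: ⟨g(z) − g(y), z − x⟩ ≤ L(δ)·V[z](x) + L(δ)·V[y](z) + δ, where L(δ) := (1/(2·δ))^{(1−ν)/(1+ν)} · L_ν^{2/(1+ν)}. -/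
open RealInnerProductSpace

/-!
The dual-norm pairing and the Hölder condition give `⟪g z - g y, z - x⟫ ≤ L_ν a^ν b` with
`a = ‖z - y‖`, `b = ‖z - x‖`. The constant `M = L(δ)` is exactly the one with
`L_ν² = (M²)^ν (2Mδ)^(1-ν)`, so weighted AM-GM gives `(L_ν a^ν)² ≤ M² a² + 2Mδ`, and then
`L_ν a^ν b ≤ (L_ν a^ν)² / (2M) + M b² / 2 ≤ M a² / 2 + M b² / 2 + δ`. Strong convexity bounds
`a² / 2` and `b² / 2` by the two Bregman divergences.

The pairing inequality needs the set defining the dual norm to be bounded above (otherwise `sSup`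
is the junk value `0`): in finite dimension the convex function `‖·‖` is continuous, hence
bounded below by a positive multiple of the Euclidean norm.
-/

section HolderSmoothnessConst

noncomputable def holderSmoothnessConst (ν L δ : ℝ) : ℝ :=
  (1 / (2 * δ)) ^ ((1 - ν) / (1 + ν)) * L ^ (2 / (1 + ν))

variable {ν L δ : ℝ}

theorem holderSmoothnessConst_pos (hL : 0 < L) (hδ : 0 < δ) :
    0 < holderSmoothnessConst ν L δ := by
  unfold holderSmoothnessConst; positivity

theorem holderSmoothnessConst_rpow_mul (hν : -1 < ν) (hL : 0 ≤ L) (hδ : 0 < δ) :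
    holderSmoothnessConst ν L δ ^ (1 + ν) * (2 * δ) ^ (1 - ν) = L ^ 2 := by
  have h1ν : 1 + ν ≠ 0 := by linarith
  rw [holderSmoothnessConst, Real.mul_rpow (by positivity) (by positivity),
    ← Real.rpow_mul (by positivity), ← Real.rpow_mul hL, div_mul_cancel₀ _ h1ν,
    div_mul_cancel₀ _ h1ν, mul_right_comm, ← Real.mul_rpow (by positivity) (by positivity),
    one_div_mul_cancel (by positivity), Real.one_rpow, one_mul, Real.rpow_two]

theorem sq_mul_rpow_le_holderSmoothnessConst (hν0 : 0 ≤ ν) (hν1 : ν ≤ 1) (hL : 0 < L)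
    (hδ : 0 < δ) {a : ℝ} (ha : 0 ≤ a) :
    (L * a ^ ν) ^ 2 ≤
      holderSmoothnessConst ν L δ ^ 2 * a ^ 2 + 2 * holderSmoothnessConst ν L δ * δ := by
  set M := holderSmoothnessConst ν L δ
  have hM : 0 < M := holderSmoothnessConst_pos hL hδ
  have hamgm : (M ^ 2 * a ^ 2) ^ ν * (2 * M * δ) ^ (1 - ν) ≤
      ν * (M ^ 2 * a ^ 2) + (1 - ν) * (2 * M * δ) :=
    Real.geom_mean_le_arith_mean2_weighted hν0 (sub_nonneg.2 hν1) (by positivity)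
      (by positivity) (by ring)
  have hMpow : (M ^ ν) ^ 2 * M ^ (1 - ν) = M ^ (1 + ν) := by
    rw [sq, ← Real.rpow_add hM, ← Real.rpow_add hM]; ring_nf
  have hid : (M ^ 2 * a ^ 2) ^ ν * (2 * M * δ) ^ (1 - ν) = (L * a ^ ν) ^ 2 := by
    rw [mul_pow, ← holderSmoothnessConst_rpow_mul (ν := ν) (by linarith) hL.le hδ, ← hMpow,
      Real.mul_rpow (by positivity) (by positivity), mul_right_comm 2 M δ,
      Real.mul_rpow (by positivity) (by positivity), ← Real.rpow_pow_comm hM.le,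
      ← Real.rpow_pow_comm ha]
    ring
  nlinarith [mul_nonneg (sub_nonneg.2 hν1) (by positivity : 0 ≤ M ^ 2 * a ^ 2),
    mul_nonneg hν0 (by positivity : 0 ≤ 2 * M * δ)]

theorem mul_rpow_mul_le_holderSmoothnessConst (hν0 : 0 ≤ ν) (hν1 : ν ≤ 1) (hL : 0 < L)
    (hδ : 0 < δ) {a b : ℝ} (ha : 0 ≤ a) :
    L * a ^ ν * b ≤
      holderSmoothnessConst ν L δ / 2 * a ^ 2 + holderSmoothnessConst ν L δ / 2 * b ^ 2 + δ := by
  set M := holderSmoothnessConst ν L δ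
  have hM : 0 < M := holderSmoothnessConst_pos hL hδ
  have key : 2 * M * (L * a ^ ν * b) ≤ 2 * M * (M / 2 * a ^ 2 + M / 2 * b ^ 2 + δ) := by
    nlinarith [sq_nonneg (L * a ^ ν - M * b), sq_mul_rpow_le_holderSmoothnessConst hν0 hν1 hL hδ ha]
  exact le_of_mul_le_mul_left key (by positivity)

end HolderSmoothnessConst

theorem Seminorm.exists_norm_le_mul {E : Type*} [NormedAddCommGroup E] [NormedSpace ℝ E]
    [FiniteDimensional ℝ E] (p : Seminorm ℝ E) (hp : ∀ x : E, x ≠ 0 → 0 < p x) :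
    ∃ C : ℝ, ∀ x : E, ‖x‖ ≤ C * p x := by
  have hcont : Continuous p := p.convexOn.locallyLipschitz.continuous
  have hinv : ContinuousOn (fun x => (p x)⁻¹) (Metric.sphere (0 : E) 1) :=
    hcont.continuousOn.inv₀ fun x hx => (hp x (ne_zero_of_mem_unit_sphere ⟨x, hx⟩)).ne'
  obtain ⟨C, hC⟩ := (isCompact_sphere (0 : E) 1).exists_bound_of_continuousOn hinv
  refine ⟨C, fun x => ?_⟩
  rcases eq_or_ne x 0 with rfl | hx
  · simp
  have hxn : 0 < ‖x‖ := norm_pos_iff.mpr hx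
  have hunit : ‖x‖⁻¹ • x ∈ Metric.sphere (0 : E) 1 := by
    simp [norm_smul, hxn.ne']
  have hbound : ‖x‖ / p x ≤ C := by
    have := (Real.le_norm_self _).trans (hC _ hunit)
    rwa [map_smul_eq_mul, norm_inv, norm_norm, mul_inv, inv_inv, ← div_eq_mul_inv] at this
  exact (div_le_iff₀ (hp x hx)).mp hbound

section DualNorm

variable {E : Type*} [NormedAddCommGroup E] [InnerProductSpace ℝ E]

noncomputable def dualNorm (p : E → ℝ) (v : E) : ℝ :=
  sSup {r : ℝ | ∃ x : E, p x ≤ 1 ∧ r = ⟪v, x⟫}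

theorem Seminorm.inner_le_dualNorm_mul [FiniteDimensional ℝ E] (p : Seminorm ℝ E)
    (hp : ∀ x : E, x ≠ 0 → 0 < p x) (v w : E) : ⟪v, w⟫ ≤ dualNorm p v * p w := by
  rcases eq_or_ne w 0 with rfl | hw
  · simp
  obtain ⟨C, hC⟩ := p.exists_norm_le_mul hp
  have hbdd : BddAbove {r : ℝ | ∃ x : E, p x ≤ 1 ∧ r = ⟪v, x⟫} := by
    refine ⟨‖v‖ * max C 0, ?_⟩
    rintro r ⟨x, hx, rfl⟩
    calc ⟪v, x⟫ ≤ ‖v‖ * ‖x‖ := real_inner_le_norm v x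
      _ ≤ ‖v‖ * (max C 0 * p x) := by
        gcongr
        exact (hC x).trans (mul_le_mul_of_nonneg_right (le_max_left _ _) (apply_nonneg p x))
      _ ≤ ‖v‖ * max C 0 := by gcongr; exact mul_le_of_le_one_right (le_max_right _ _) hx
  have hpw : 0 < p w := hp w hw
  have hunit : p ((p w)⁻¹ • w) ≤ 1 := by
    rw [map_smul_eq_mul, Real.norm_eq_abs, abs_of_pos (inv_pos.mpr hpw), inv_mul_cancel₀ hpw.ne']
  have hle : ⟪v, (p w)⁻¹ • w⟫ ≤ dualNorm p v := le_csSup hbdd ⟨_, hunit, rfl⟩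
  rw [real_inner_smul_right, inv_mul_le_iff₀ hpw, mul_comm] at hle
  exact hle

end DualNorm

theorem stmt16_general
    {E : Type*} [NormedAddCommGroup E] [InnerProductSpace ℝ E] [FiniteDimensional ℝ E]
    (Q : Set E)
    (d : E → ℝ) (Dd : E → E)
    (nrm : E → ℝ)
    (hn_add : ∀ x y : E, nrm (x + y) ≤ nrm x + nrm y)
    (hn_smul : ∀ (a : ℝ) (x : E), nrm (a • x) = |a| * nrm x)
    (hn_pos : ∀ x : E, x ≠ 0 → 0 < nrm x)
    (dnrm : E → ℝ)
    (hdnrm : ∀ v : E, dnrm v = sSup {r : ℝ | ∃ x : E, nrm x ≤ 1 ∧ r = ⟪v, x⟫})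
    (hsc : ∀ x ∈ Q, ∀ y ∈ Q, 1 / 2 * nrm (x - y) ^ 2 ≤ breg d Dd y x)
    (ν Lν : ℝ) (hν0 : 0 ≤ ν) (hν1 : ν ≤ 1) (hLν : 0 < Lν)
    (g : E → E)
    (hHolder : ∀ x ∈ Q, ∀ y ∈ Q, dnrm (g x - g y) ≤ Lν * nrm (x - y) ^ ν) :
    ∀ δ : ℝ, 0 < δ → ∀ x ∈ Q, ∀ y ∈ Q, ∀ z ∈ Q,
      ⟪g z - g y, z - x⟫ ≤
        (1 / (2 * δ)) ^ ((1 - ν) / (1 + ν)) * Lν ^ (2 / (1 + ν)) * breg d Dd z x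
          + (1 / (2 * δ)) ^ ((1 - ν) / (1 + ν)) * Lν ^ (2 / (1 + ν)) * breg d Dd y z + δ := by
  intro δ hδ x hx y hy z hz
  let p : Seminorm ℝ E := .of nrm hn_add fun a u => by rw [Real.norm_eq_abs]; exact hn_smul a u
  set M := holderSmoothnessConst ν Lν δ
  have hM : 0 < M := holderSmoothnessConst_pos hLν hδ
  have hzx : 1 / 2 * nrm (z - x) ^ 2 ≤ breg d Dd z x := by
    rw [show nrm (z - x) = nrm (x - z) from map_sub_rev p z x]
    exact hsc x hx z hz
  have hzy : 1 / 2 * nrm (z - y) ^ 2 ≤ breg d Dd y z := hsc z hz y hy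
  calc ⟪g z - g y, z - x⟫ ≤ dnrm (g z - g y) * nrm (z - x) := by
        rw [hdnrm]; exact p.inner_le_dualNorm_mul hn_pos _ _
    _ ≤ Lν * nrm (z - y) ^ ν * nrm (z - x) :=
        mul_le_mul_of_nonneg_right (hHolder z hz y hy) (apply_nonneg p _)
    _ ≤ M / 2 * nrm (z - y) ^ 2 + M / 2 * nrm (z - x) ^ 2 + δ :=
        mul_rpow_mul_le_holderSmoothnessConst hν0 hν1 hLν hδ (apply_nonneg p _)
    _ ≤ M * breg d Dd z x + M * breg d Dd y z + δ := by
        linarith [mul_le_mul_of_nonneg_left hzx hM.le, mul_le_mul_of_nonneg_left hzy hM.le]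

/-- Example 4.13: a monotone operator with Hölder continuous values
(w.r.t. a norm `nrm` with dual norm `dnrm`, for a `1`-strongly convex `d`) admits the
inexact relative smoothness inequality with constant
`L(δ) = (1/(2δ))^((1−ν)/(1+ν)) · L_ν^(2/(1+ν))`. -/
theorem stmt16
    {E : Type*} [NormedAddCommGroup E] [InnerProductSpace ℝ E] [FiniteDimensional ℝ E]
    (Q : Set E) (hQ : Convex ℝ Q)
    (d : E → ℝ) (Dd : E → E)
    (hd_conv : ConvexOn ℝ Set.univ d) (hd_diff : ∀ x, HasGradientAt d (Dd x) x)
    (nrm : E → ℝ)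
    (hn_add : ∀ x y : E, nrm (x + y) ≤ nrm x + nrm y)
    (hn_smul : ∀ (a : ℝ) (x : E), nrm (a • x) = |a| * nrm x)
    (hn_pos : ∀ x : E, x ≠ 0 → 0 < nrm x)
    (dnrm : E → ℝ)
    (hdnrm : ∀ v : E, dnrm v = sSup {r : ℝ | ∃ x : E, nrm x ≤ 1 ∧ r = ⟪v, x⟫})
    (hsc : ∀ x ∈ Q, ∀ y ∈ Q, 1 / 2 * nrm (x - y) ^ 2 ≤ breg d Dd y x)
    (ν Lν : ℝ) (hν0 : 0 ≤ ν) (hν1 : ν ≤ 1) (hLν : 0 < Lν)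
    (g : E → E)
    (hHolder : ∀ x ∈ Q, ∀ y ∈ Q, dnrm (g x - g y) ≤ Lν * nrm (x - y) ^ ν) :
    ∀ δ : ℝ, 0 < δ → ∀ x ∈ Q, ∀ y ∈ Q, ∀ z ∈ Q,
      ⟪g z - g y, z - x⟫ ≤
        (1 / (2 * δ)) ^ ((1 - ν) / (1 + ν)) * Lν ^ (2 / (1 + ν)) * breg d Dd z x
          + (1 / (2 * δ)) ^ ((1 - ν) / (1 + ν)) * Lν ^ (2 / (1 + ν)) * breg d Dd y z + δ :=
  stmt16_general Q d Dd nrm hn_add hn_smul hn_pos dnrm hdnrm hsc ν Lν hν0 hν1 hLν g hHolder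
end

section
/- Let g : ℝ^m → ℝ be convex, M-Lipschitz with respect to the ℓ₁-norm (|g(a) − g(b)| ≤ M·‖a − b‖₁), and nondecreasing in each of its arguments (a ≤ b componentwise implies g(a) ≤ g(b)). For k = 1, …, m let g_k : E → ℝ be convex and differentiable with 0 ≤ g_k(x) − g_k(y) − ⟨∇g_k(y), x − y⟩ ≤ (L_k/2)·‖x − y‖² for all x, y ∈ Q, and let d be 1-strongly convex with respect to the norm ‖·‖ (V[y](x) ≥ (1/2)·‖x − y‖²). Define f(x) := g(g₁(x), …, g_m(x)) and ψ(x, y) := g(g₁(y) + ⟨∇g₁(y), x − y⟩, …, g_m(y) + ⟨∇g_m(y), x − y⟩) − f(y). Then for all x, y ∈ Q: 0 ≤ f(x) − f(y) − ψ(x, y) ≤ M·(∑_{k=1}^{m} L_k)·V[y](x); moreover ψ(·, y) is convex on Q with ψ(y, y) = 0. -/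
open RealInnerProductSpace

/-- Example 2.3: the linearization model of a monotone Lipschitz
superposition `f = g ∘ (g₁, …, g_m)` of smooth convex functions is a
`(0, M·∑ L_k)`-model of `f`. -/
theorem stmt17
    {E : Type*} [NormedAddCommGroup E] [InnerProductSpace ℝ E] [FiniteDimensional ℝ E]
    (Q : Set E) (hQ : Convex ℝ Q)
    (d : E → ℝ) (Dd : E → E)
    (hd_conv : ConvexOn ℝ Set.univ d) (hd_diff : ∀ x, HasGradientAt d (Dd x) x)
    (hsc : ∀ x ∈ Q, ∀ y ∈ Q, 1 / 2 * ‖x - y‖ ^ 2 ≤ breg d Dd y x)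
    (m : ℕ) (g : (Fin m → ℝ) → ℝ) (M : ℝ) (hM : 0 ≤ M)
    (hg_conv : ConvexOn ℝ Set.univ g)
    (hg_lip : ∀ a b : Fin m → ℝ, |g a - g b| ≤ M * ∑ i, |a i - b i|)
    (hg_mono : ∀ a b : Fin m → ℝ, (∀ i, a i ≤ b i) → g a ≤ g b)
    (gs : Fin m → E → ℝ) (Dgs : Fin m → E → E) (Lc : Fin m → ℝ)
    (hgs_conv : ∀ k, ConvexOn ℝ Set.univ (gs k))
    (hgs_diff : ∀ k x, HasGradientAt (gs k) (Dgs k x) x)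
    (hgs_smooth : ∀ k, ∀ x ∈ Q, ∀ y ∈ Q,
      0 ≤ gs k x - gs k y - ⟪Dgs k y, x - y⟫ ∧
      gs k x - gs k y - ⟪Dgs k y, x - y⟫ ≤ Lc k / 2 * ‖x - y‖ ^ 2)
    (f : E → ℝ) (hf : ∀ x, f x = g fun k => gs k x)
    (ψ : E → E → ℝ)
    (hψ : ∀ x y, ψ x y = g (fun k => gs k y + ⟪Dgs k y, x - y⟫) - f y) :
    (∀ x ∈ Q, ∀ y ∈ Q,
      0 ≤ f x - f y - ψ x y ∧
      f x - f y - ψ x y ≤ M * (∑ k, Lc k) * breg d Dd y x) ∧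
    ∀ y ∈ Q, ConvexOn ℝ Q (fun x => ψ x y) ∧ ψ y y = 0 := by
  constructor
  · intro x hx y hy
    have hdiff : f x - f y - ψ x y
        = g (fun k => gs k x) - g (fun k => gs k y + ⟪Dgs k y, x - y⟫) := by
      rw [hf x, hψ x y]; ring
    have hlow : ∀ k, gs k y + ⟪Dgs k y, x - y⟫ ≤ gs k x := fun k => by
      linarith [(hgs_smooth k x hx y hy).1]
    constructor
    · rw [hdiff]
      have := hg_mono _ _ hlow
      linarith
    · rw [hdiff]
      have h1 : g (fun k => gs k x) - g (fun k => gs k y + ⟪Dgs k y, x - y⟫)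
          ≤ M * ∑ i, |gs i x - (gs i y + ⟪Dgs i y, x - y⟫)| :=
        le_trans (le_abs_self _) (hg_lip _ _)
      have habs : ∀ i, |gs i x - (gs i y + ⟪Dgs i y, x - y⟫)|
          = gs i x - gs i y - ⟪Dgs i y, x - y⟫ := fun i => by
        rw [abs_of_nonneg (by linarith [(hgs_smooth i x hx y hy).1])]; ring
      have hsum : ∑ i, |gs i x - (gs i y + ⟪Dgs i y, x - y⟫)|
          ≤ (∑ k, Lc k) * (1 / 2 * ‖x - y‖ ^ 2) := by
        rw [Finset.sum_mul]
        apply Finset.sum_le_sum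
        intro i _
        rw [habs i]
        have := (hgs_smooth i x hx y hy).2
        linarith
      by_cases hxy : x = y
      · subst hxy
        have hb : breg d Dd x x = 0 := by simp [breg]
        have hzero : ∀ i, |gs i x - (gs i x + ⟪Dgs i x, x - x⟫)| = 0 := fun i => by
          simp
        rw [hb]
        calc g (fun k => gs k x) - g (fun k => gs k x + ⟪Dgs k x, x - x⟫)
            ≤ M * ∑ i, |gs i x - (gs i x + ⟪Dgs i x, x - x⟫)| := h1
          _ = 0 := by simp [hzero]
          _ ≤ M * (∑ k, Lc k) * 0 := by simp
      · have hpos : 0 < ‖x - y‖ ^ 2 := by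
          have h0 : 0 < ‖x - y‖ := by
            rw [norm_pos_iff]
            exact sub_ne_zero.2 hxy
          exact pow_pos h0 2
        have hLk : ∀ k ∈ Finset.univ, (0:ℝ) ≤ Lc k := fun k _ => by
          have h := hgs_smooth k x hx y hy
          nlinarith [h.1, h.2]
        have hL : (0:ℝ) ≤ ∑ k, Lc k := Finset.sum_nonneg hLk
        have hbr := hsc x hx y hy
        calc g (fun k => gs k x) - g (fun k => gs k y + ⟪Dgs k y, x - y⟫)
            ≤ M * ((∑ k, Lc k) * (1 / 2 * ‖x - y‖ ^ 2)) := by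
              apply le_trans h1; exact mul_le_mul_of_nonneg_left hsum hM
          _ ≤ M * ((∑ k, Lc k) * breg d Dd y x) := by
              apply mul_le_mul_of_nonneg_left _ hM
              exact mul_le_mul_of_nonneg_left hbr hL
          _ = M * (∑ k, Lc k) * breg d Dd y x := by ring
  · intro y hy
    constructor
    · constructor
      · exact hQ
      · intro x hx z hz a b ha hb hab
        show ψ (a • x + b • z) y ≤ a • ψ x y + b • ψ z y
        rw [hψ _ y, hψ _ y, hψ _ y]
        have hlin : (fun k => gs k y + ⟪Dgs k y, a • x + b • z - y⟫)
            = a • (fun k => gs k y + ⟪Dgs k y, x - y⟫)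
              + b • (fun k => gs k y + ⟪Dgs k y, z - y⟫) := by
          funext k
          simp only [Pi.add_apply, Pi.smul_apply, smul_eq_mul]
          have h1 : a • (x - y) + b • (z - y) = a • x + b • z - (a + b) • y := by
            module
          have h2 : a • x + b • z - y = a • (x - y) + b • (z - y) := by
            rw [h1, hab, one_smul]
          rw [h2, inner_add_right, real_inner_smul_right, real_inner_smul_right]
          linear_combination (-(gs k y)) * hab
        rw [hlin]
        have hcv := hg_conv.2 (Set.mem_univ (fun k => gs k y + ⟪Dgs k y, x - y⟫))
          (Set.mem_univ (fun k => gs k y + ⟪Dgs k y, z - y⟫)) ha hb hab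
        have hfy : a * f y + b * f y = f y := by rw [← add_mul, hab, one_mul]
        simp only [smul_eq_mul] at hcv ⊢
        linarith
    · rw [hψ y y, hf y]
      simp
end
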